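/- The number of pairs (w_0, w_1) with w_0 ⪯ w_1 in W(n-k, k) equals the Narayana number N(n+1, k+1) = (1/(n+1)) * C(n+1, k+1) * C(n+1, k). -/

import Mathlib

/-- Positions (0-indexed, left to right) of the minus signs (`false`) in a word. -/
def minusPos (w : List Bool) : List ℕ :=
  (List.range w.length).filter (fun i => w.getD i true = false)

/-- `w ∈ W(n₋, n₊)`: the word has `n₋` minus signs and `n₊` plus signs. -/
def memW (nm np : ℕ) (w : List Bool) : Prop :=
  w.count false = nm ∧ w.count true = np

/-- The partial order `⪯`: the i'th minus sign of `w₀` occurs at a position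
less than or equal to the position of the i'th minus sign of `w₁`. -/
def wle (w₀ w₁ : List Bool) : Prop :=
  ∀ i, (minusPos w₀).getD i 0 ≤ (minusPos w₁).getD i 0

/-!
Encode a word of length `n` by the set `S ⊆ {0, …, n-1}` of positions of its minus signs.
For words with equally many minus signs, `w₀ ⪯ w₁` says that every prefix of `w₀` contains
at least as many minus signs as the prefix of `w₁` of the same length; call a pair of sets
*crossing* when this fails. André's reflection — exchanging the two sets beyond the first
position where the second one gets ahead — is an involution on crossing pairs which turns
sizes `(m + 1, m + 1)` into `(m, m + 2)`, and every pair of the latter sizes is crossing.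
Hence there are `C(n, m+1)² - C(n, m) C(n, m+2)` dominated pairs, and this is the Narayana
number `C(n+1, m+1) C(n+1, m+2) / (n+1)`.
-/

open Finset

def countBelow (S : Finset ℕ) (t : ℕ) : ℕ := #{i ∈ S | i < t}

lemma countBelow_zero (S : Finset ℕ) : countBelow S 0 = 0 := by simp [countBelow]

lemma countBelow_mono (S : Finset ℕ) : Monotone (countBelow S) := fun _ _ hst =>
  card_le_card (monotone_filter_right S fun _ _ hi => hi.trans_le hst)

lemma countBelow_succ_le (S : Finset ℕ) (t : ℕ) : countBelow S (t + 1) ≤ countBelow S t + 1 :=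
  calc countBelow S (t + 1) ≤ #(insert t {i ∈ S | i < t}) :=
        card_le_card fun i hi => by
          rw [mem_filter] at hi
          rw [mem_insert, mem_filter]
          exact (Nat.lt_succ_iff_lt_or_eq.1 hi.2).symm.imp id (⟨hi.1, ·⟩)
    _ ≤ countBelow S t + 1 := card_insert_le _ _

lemma countBelow_eq_card {S : Finset ℕ} {t : ℕ} (h : S ⊆ range t) : countBelow S t = #S := by
  rw [countBelow, filter_true_of_mem fun i hi => mem_range.1 (h hi)]

def crossingTimes (q : Finset ℕ × Finset ℕ) : Set ℕ :=
  {t | countBelow q.1 t < countBelow q.2 t}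

def Crossing (q : Finset ℕ × Finset ℕ) : Prop := (crossingTimes q).Nonempty

noncomputable instance : DecidablePred Crossing := Classical.decPred _

lemma crossing_of_card_lt {q : Finset ℕ × Finset ℕ} (h : #q.1 < #q.2) : Crossing q := by
  obtain ⟨t, ht⟩ := exists_nat_subset_range (q.1 ∪ q.2)
  refine ⟨t, show countBelow q.1 t < countBelow q.2 t from ?_⟩
  rwa [countBelow_eq_card (subset_union_left.trans ht),
    countBelow_eq_card (subset_union_right.trans ht)]

lemma not_crossing_of_snd_eq_empty {q : Finset ℕ × Finset ℕ} (h : q.2 = ∅) : ¬ Crossing q :=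
  fun ⟨t, ht⟩ => by simp [crossingTimes, countBelow, h] at ht

def swapAt (t : ℕ) (q : Finset ℕ × Finset ℕ) : Finset ℕ × Finset ℕ :=
  ({i ∈ q.1 | i < t} ∪ {i ∈ q.2 | t ≤ i}, {i ∈ q.2 | i < t} ∪ {i ∈ q.1 | t ≤ i})

section swapAt

variable {t : ℕ} (q : Finset ℕ × Finset ℕ)

lemma swapAt_swapAt : swapAt t (swapAt t q) = q := by
  ext i <;> rcases lt_or_ge i t with h | h <;> simp [swapAt, h, Nat.not_le_of_lt, not_lt.2]

lemma countBelow_swapAt_fst {s : ℕ} (hs : s ≤ t) :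
    countBelow (swapAt t q).1 s = countBelow q.1 s := by
  simp only [countBelow, swapAt]
  congr 1; ext i
  by_cases hi : i < s
  · simp [hi, hi.trans_le hs, not_le.2 (hi.trans_le hs)]
  · simp [hi]

lemma countBelow_swapAt_snd {s : ℕ} (hs : s ≤ t) :
    countBelow (swapAt t q).2 s = countBelow q.2 s :=
  countBelow_swapAt_fst q.swap hs

lemma card_swapAt_fst_add : #(swapAt t q).1 + countBelow q.2 t = countBelow q.1 t + #q.2 := by
  have := card_filter_add_card_filter_not (s := q.2) (· < t)
  rw [swapAt, card_union_of_disjoint (disjoint_filter_filter' _ _ fun _ hlt hle i hi => ?_)]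
  · simp only [countBelow, not_lt] at this ⊢; omega
  · exact absurd (hle i hi) (not_le.2 (hlt i hi))

lemma card_swapAt_snd_add : #(swapAt t q).2 + countBelow q.1 t = countBelow q.2 t + #q.1 :=
  card_swapAt_fst_add q.swap

end swapAt

noncomputable def firstCrossing (q : Finset ℕ × Finset ℕ) : ℕ := sInf (crossingTimes q)

noncomputable def reflect (q : Finset ℕ × Finset ℕ) : Finset ℕ × Finset ℕ :=
  swapAt (firstCrossing q) q

lemma mem_crossingTimes_reflect_iff {q : Finset ℕ × Finset ℕ} {s : ℕ}
    (hs : s ≤ firstCrossing q) : s ∈ crossingTimes (reflect q) ↔ s ∈ crossingTimes q := by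
  simp only [crossingTimes, Set.mem_ofPred_eq, reflect, countBelow_swapAt_fst _ hs,
    countBelow_swapAt_snd _ hs]

section reflect

variable {q : Finset ℕ × Finset ℕ} (hq : Crossing q)
include hq

lemma firstCrossing_mem_crossingTimes : firstCrossing q ∈ crossingTimes q := Nat.sInf_mem hq

-- Both counts start at `0`, and `countBelow q.2` grows by at most one per step.
lemma countBelow_firstCrossing :
    countBelow q.2 (firstCrossing q) = countBelow q.1 (firstCrossing q) + 1 := by
  have hlt : firstCrossing q ∈ crossingTimes q := firstCrossing_mem_crossingTimes hq
  obtain ⟨s, hs⟩ : ∃ s, firstCrossing q = s + 1 :=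
    Nat.exists_eq_succ_of_ne_zero fun h0 => by simp [crossingTimes, h0, countBelow_zero] at hlt
  have hbefore : s ∉ crossingTimes q := Nat.notMem_of_lt_sInf (show s < firstCrossing q by omega)
  have := countBelow_succ_le q.2 s
  have := countBelow_mono q.1 (Nat.le_add_right s 1)
  simp only [crossingTimes, Set.mem_ofPred_eq] at hlt hbefore
  rw [hs] at hlt ⊢
  omega

lemma crossing_reflect : Crossing (reflect q) :=
  ⟨_, (mem_crossingTimes_reflect_iff le_rfl).2 (firstCrossing_mem_crossingTimes hq)⟩

lemma firstCrossing_reflect : firstCrossing (reflect q) = firstCrossing q := by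
  refine le_antisymm (Nat.sInf_le ?_) (le_csInf (crossing_reflect hq) fun s hs => ?_)
  · exact (mem_crossingTimes_reflect_iff le_rfl).2 (firstCrossing_mem_crossingTimes hq)
  · by_contra! hlt
    exact Nat.notMem_of_lt_sInf hlt ((mem_crossingTimes_reflect_iff hlt.le).1 hs)

lemma reflect_reflect : reflect (reflect q) = q := by
  rw [reflect, firstCrossing_reflect hq]
  exact swapAt_swapAt q

lemma card_reflect : #(reflect q).1 + 1 = #q.2 ∧ #(reflect q).2 = #q.1 + 1 := by
  have := countBelow_firstCrossing hq
  have := card_swapAt_fst_add (t := firstCrossing q) q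
  have := card_swapAt_snd_add (t := firstCrossing q) q
  constructor <;> unfold reflect <;> omega

end reflect

def pairsOfCard (n a b : ℕ) : Finset (Finset ℕ × Finset ℕ) :=
  (range n).powersetCard a ×ˢ (range n).powersetCard b

lemma card_pairsOfCard (n a b : ℕ) : #(pairsOfCard n a b) = n.choose a * n.choose b := by
  simp [pairsOfCard]

lemma reflect_mem_pairsOfCard {n a b : ℕ} {q : Finset ℕ × Finset ℕ} (hq : Crossing q)
    (h : q ∈ pairsOfCard n a (b + 1)) : reflect q ∈ pairsOfCard n b (a + 1) := by
  simp only [pairsOfCard, mem_product, mem_powersetCard] at h ⊢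
  have hcard := card_reflect hq
  have hsub : ∀ t, (swapAt t q).1 ⊆ range n ∧ (swapAt t q).2 ⊆ range n := fun t =>
    ⟨union_subset ((filter_subset _ _).trans h.1.1) ((filter_subset _ _).trans h.2.1),
      union_subset ((filter_subset _ _).trans h.2.1) ((filter_subset _ _).trans h.1.1)⟩
  exact ⟨⟨(hsub _).1, by omega⟩, (hsub _).2, by omega⟩

lemma card_filter_crossing_pairsOfCard_comm (n a b : ℕ) :
    #{q ∈ pairsOfCard n a (b + 1) | Crossing q}
      = #{q ∈ pairsOfCard n b (a + 1) | Crossing q} := by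
  refine card_nbij' reflect reflect ?_ ?_ ?_ ?_ <;> intro q hq <;> rw [mem_coe, mem_filter] at hq
  · exact mem_filter.2 ⟨reflect_mem_pairsOfCard hq.2 hq.1, crossing_reflect hq.2⟩
  · exact mem_filter.2 ⟨reflect_mem_pairsOfCard hq.2 hq.1, crossing_reflect hq.2⟩
  · exact reflect_reflect hq.2
  · exact reflect_reflect hq.2

lemma card_filter_crossing_pairsOfCard (n m : ℕ) :
    #{q ∈ pairsOfCard n (m + 1) (m + 1) | Crossing q} = n.choose m * n.choose (m + 2) := by
  rw [card_filter_crossing_pairsOfCard_comm, filter_true_of_mem, card_pairsOfCard]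
  intro q hq
  simp only [pairsOfCard, mem_product, mem_powersetCard] at hq
  exact crossing_of_card_lt (by omega)

noncomputable def dominatedPairs (n m : ℕ) : Finset (Finset ℕ × Finset ℕ) :=
  {q ∈ pairsOfCard n m m | ¬ Crossing q}

lemma card_dominatedPairs_add (n m : ℕ) :
    #(dominatedPairs n m) + #{q ∈ pairsOfCard n m m | Crossing q} = n.choose m ^ 2 := by
  rw [dominatedPairs, add_comm, card_filter_add_card_filter_not, card_pairsOfCard, sq]

lemma add_one_mul_choose_sq_eq (n j : ℕ) :
    (n + 1) * n.choose (j + 1) ^ 2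
      = (n + 1) * (n.choose j * n.choose (j + 2))
        + (n + 1).choose (j + 1) * (n + 1).choose (j + 2) := by
  rcases lt_or_ge n (j + 1) with hn | hn
  · simp [Nat.choose_eq_zero_of_lt hn, Nat.choose_eq_zero_of_lt (hn.trans (Nat.lt_succ_self _)),
      Nat.choose_eq_zero_of_lt (show n + 1 < j + 2 by omega)]
  obtain ⟨u, rfl⟩ : ∃ u, n = j + 1 + u := ⟨n - (j + 1), by omega⟩
  set N := j + 1 + u + 1
  set a := (j + 1 + u).choose (j + 1)
  set b := (j + 1 + u).choose (j + 2)
  set c := (j + 1 + u).choose j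
  set A := N.choose (j + 2)
  set B := N.choose (j + 1)
  have e1 : b * (j + 2) = a * u := by
    simpa [show j + 1 + u - (j + 1) = u by omega] using Nat.choose_succ_right_eq (j + 1 + u) (j + 1)
  have e2 : a * (j + 1) = c * (u + 1) := by
    simpa [show j + 1 + u - j = u + 1 by omega] using Nat.choose_succ_right_eq (j + 1 + u) j
  have e3 : N * a = A * (j + 2) := Nat.add_one_mul_choose_eq (j + 1 + u) (j + 1)
  have e4 : N * c = B * (j + 1) := Nat.add_one_mul_choose_eq (j + 1 + u) j
  have hN : (N : ℤ) = j + u + 2 := by push_cast [N]; ring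
  refine Nat.eq_of_mul_eq_mul_right (show 0 < (j + 1) * (j + 2) by positivity) ?_
  zify at e1 e2 e3 e4 ⊢
  linear_combination (↑N * a * (j + 2) : ℤ) * e2 - (↑N * c * (j + 1) : ℤ) * e1
    + (B * (j + 1) : ℤ) * e3 + (↑N * a : ℤ) * e4 - (↑N * c * a : ℤ) * hN

lemma add_one_mul_card_dominatedPairs (n m : ℕ) :
    (n + 1) * #(dominatedPairs n m) = (n + 1).choose m * (n + 1).choose (m + 1) := by
  have hsum := card_dominatedPairs_add n m
  cases m with
  | zero =>
    have hnone : ∀ q ∈ pairsOfCard n 0 0, ¬ Crossing q := fun q hq => by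
      simp only [pairsOfCard, powersetCard_zero, mem_product, mem_singleton] at hq
      exact not_crossing_of_snd_eq_empty hq.2
    rw [filter_false_of_mem hnone, card_empty, add_zero, Nat.choose_zero_right, one_pow] at hsum
    simp [hsum]
  | succ j =>
    rw [card_filter_crossing_pairsOfCard] at hsum
    refine Nat.add_right_cancel (m := (n + 1) * (n.choose j * n.choose (j + 2))) ?_
    rw [← mul_add, hsum, add_one_mul_choose_sq_eq, add_comm]

lemma List.Pairwise.getElem_lt_iff_lt_countP {u : List ℕ} (hu : u.Pairwise (· < ·)) {i t : ℕ}
    (hi : i < u.length) : u[i] < t ↔ i < u.countP (· < t) := by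
  induction u generalizing i with
  | nil => simp at hi
  | cons x u ih =>
    rw [List.pairwise_cons] at hu
    rw [List.countP_cons]
    by_cases hx : x < t
    · cases i with
      | zero => simp [hx]
      | succ i => simpa [hx] using ih hu.2 (by simpa using hi)
    · have hall : u.countP (· < t) = 0 :=
        List.countP_eq_zero.2 fun y hy => by simpa using (not_lt.1 hx).trans (hu.1 y hy).le
      cases i with
      | zero => simp [hx, hall]
      | succ i =>
        simpa [hx, hall] using (not_lt.1 hx).trans (hu.1 _ (List.getElem_mem _)).le

lemma List.Pairwise.forall_getD_le_iff_forall_countP_le {u v : List ℕ}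
    (hu : u.Pairwise (· < ·)) (hv : v.Pairwise (· < ·)) (hlen : u.length = v.length) :
    (∀ i, u.getD i 0 ≤ v.getD i 0) ↔ ∀ t, v.countP (· < t) ≤ u.countP (· < t) := by
  constructor
  · intro h t
    by_contra! hlt
    set i := u.countP (· < t)
    have hiv : i < v.length := hlt.trans_le List.countP_le_length
    have hiu : i < u.length := hlen ▸ hiv
    have hvt : v[i] < t := (hv.getElem_lt_iff_lt_countP hiv).2 hlt
    have hut : ¬ u[i] < t := fun h' => lt_irrefl i ((hu.getElem_lt_iff_lt_countP hiu).1 h')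
    have := h i
    rw [List.getD_eq_getElem _ _ hiu, List.getD_eq_getElem _ _ hiv] at this
    omega
  · intro h i
    by_cases hiu : i < u.length
    · have hiv : i < v.length := hlen ▸ hiu
      rw [List.getD_eq_getElem _ _ hiu, List.getD_eq_getElem _ _ hiv, ← Nat.lt_succ_iff,
        hu.getElem_lt_iff_lt_countP hiu]
      exact ((hv.getElem_lt_iff_lt_countP hiv).1 (Nat.lt_succ_self _)).trans_le (h _)
    · rw [List.getD_eq_default _ _ (not_lt.1 hiu)]
      exact Nat.zero_le _

def minusSet (w : List Bool) : Finset ℕ := {i ∈ range w.length | w.getD i true = false}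

lemma minusSet_val (w : List Bool) : (minusSet w).val = minusPos w := rfl

lemma mem_minusSet {w : List Bool} {i : ℕ} :
    i ∈ minusSet w ↔ ∃ h : i < w.length, w[i] = false := by
  simp only [minusSet, mem_filter, mem_range]
  exact ⟨fun ⟨h, hw⟩ => ⟨h, by rwa [List.getD_eq_getElem _ _ h] at hw⟩,
    fun ⟨h, hw⟩ => ⟨h, by rwa [List.getD_eq_getElem _ _ h]⟩⟩

lemma countBelow_minusSet (w : List Bool) (t : ℕ) :
    countBelow (minusSet w) t = (minusPos w).countP (· < t) := by
  rw [countBelow, card_def, filter_val, minusSet_val, Multiset.filter_coe, Multiset.coe_card,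
    List.countP_eq_length_filter]

lemma length_minusPos (w : List Bool) : (minusPos w).length = w.count false := by
  have hw : (List.range w.length).map (w.getD · true) = w :=
    List.ext_getElem (by simp) fun i _ h => by simp [h]
  conv_rhs => rw [← hw]
  rw [List.count_eq_countP, List.countP_map, List.countP_eq_length_filter]
  rfl

lemma card_minusSet (w : List Bool) : #(minusSet w) = w.count false := by
  rw [card_def, minusSet_val, Multiset.coe_card, length_minusPos]

lemma minusPos_pairwise (w : List Bool) : (minusPos w).Pairwise (· < ·) :=
  List.pairwise_lt_range.filter _

lemma wle_iff_not_crossing {w₀ w₁ : List Bool} (h : w₀.count false = w₁.count false) :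
    wle w₀ w₁ ↔ ¬ Crossing (minusSet w₀, minusSet w₁) := by
  simp only [wle, Crossing, crossingTimes, Set.not_nonempty_iff_eq_empty,
    Set.eq_empty_iff_forall_notMem, Set.mem_ofPred_eq, not_lt, countBelow_minusSet]
  exact (minusPos_pairwise w₀).forall_getD_le_iff_forall_countP_le (minusPos_pairwise w₁)
    (by rw [length_minusPos, length_minusPos, h])

lemma eq_of_minusSet_eq {w₀ w₁ : List Bool} (hlen : w₀.length = w₁.length)
    (h : minusSet w₀ = minusSet w₁) : w₀ = w₁ :=
  List.ext_getElem hlen fun i h₀ h₁ => by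
    simpa [mem_minusSet, h₀, h₁] using congrArg (i ∈ ·) h

lemma exists_minusSet_eq {n : ℕ} {S : Finset ℕ} (hS : S ⊆ range n) :
    ∃ w : List Bool, w.length = n ∧ minusSet w = S := by
  refine ⟨(List.range n).map (· ∉ S), by simp, ?_⟩
  ext i
  simpa [mem_minusSet] using fun h => mem_range.1 (hS h)

lemma memW_iff (m k : ℕ) (w : List Bool) :
    memW m k w ↔ w.length = m + k ∧ #(minusSet w) = m := by
  rw [memW, card_minusSet, ← List.count_false_add_count_true]
  omega

lemma minusSet_mem_powersetCard {m k : ℕ} {w : List Bool} (hw : memW m k w) :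
    minusSet w ∈ (range (m + k)).powersetCard m := by
  rw [memW_iff] at hw
  exact mem_powersetCard.2 ⟨hw.1 ▸ filter_subset _ _, hw.2⟩

lemma ncard_wle_pairs (m k : ℕ) :
    {p : List Bool × List Bool | memW m k p.1 ∧ memW m k p.2 ∧ wle p.1 p.2}.ncard
      = #(dominatedPairs (m + k) m) := by
  rw [← Set.ncard_coe_finset]
  refine Set.ncard_congr (fun p _ => (minusSet p.1, minusSet p.2)) ?_ ?_ ?_
  · rintro ⟨w₀, w₁⟩ ⟨h₀, h₁, hle⟩
    refine mem_filter.2 ⟨mem_product.2 ⟨minusSet_mem_powersetCard h₀,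
      minusSet_mem_powersetCard h₁⟩, ?_⟩
    exact (wle_iff_not_crossing (h₀.1.trans h₁.1.symm)).1 hle
  · rintro ⟨w₀, w₁⟩ ⟨v₀, v₁⟩ ⟨h₀, h₁, -⟩ ⟨g₀, g₁, -⟩ h
    rw [memW_iff] at h₀ h₁ g₀ g₁
    simp only [Prod.mk.injEq] at h ⊢
    exact ⟨eq_of_minusSet_eq (h₀.1.trans g₀.1.symm) h.1,
      eq_of_minusSet_eq (h₁.1.trans g₁.1.symm) h.2⟩
  · rintro ⟨S₀, S₁⟩ hS
    simp only [dominatedPairs, pairsOfCard, coe_filter, mem_product, mem_powersetCard,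
      Set.mem_ofPred_eq] at hS
    obtain ⟨⟨⟨hS₀, hc₀⟩, hS₁, hc₁⟩, hcross⟩ := hS
    obtain ⟨w₀, hl₀, rfl⟩ := exists_minusSet_eq hS₀
    obtain ⟨w₁, hl₁, rfl⟩ := exists_minusSet_eq hS₁
    have h₀ : memW m k w₀ := (memW_iff m k w₀).2 ⟨hl₀, hc₀⟩
    have h₁ : memW m k w₁ := (memW_iff m k w₁).2 ⟨hl₁, hc₁⟩
    refine ⟨(w₀, w₁), ⟨h₀, h₁, ?_⟩, rfl⟩
    exact (wle_iff_not_crossing (h₀.1.trans h₁.1.symm)).2 hcross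

/-- The number of pairs `w₀ ⪯ w₁` in `W(n-k, k)` is the Narayana number
`N(n+1, k+1) = (1/(n+1))·C(n+1,k+1)·C(n+1,k)`. -/
theorem stmt7 (n k : ℕ) (hk : k ≤ n) :
    {p : List Bool × List Bool |
        memW (n - k) k p.1 ∧ memW (n - k) k p.2 ∧ wle p.1 p.2}.ncard
      = (n+1).choose (k+1) * (n+1).choose k / (n+1) := by
  obtain ⟨m, rfl⟩ : ∃ m, n = m + k := ⟨n - k, by omega⟩
  rw [Nat.add_sub_cancel, ncard_wle_pairs]
  refine Nat.eq_div_of_mul_eq_right (Nat.succ_ne_zero _) ?_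
  rw [add_one_mul_card_dominatedPairs,
    Nat.choose_symm_of_eq_add (show m + k + 1 = m + (k + 1) by omega),
    Nat.choose_symm_of_eq_add (show m + k + 1 = (m + 1) + k by omega)]
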